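/- Let R be a reverse homogeneous equidepth step bisimulation between stable configuration structures C and D. If X —a,k→ X' and Y —a,k'→ Y' with R(X, Y) and R(X', Y'), then k = k'. -/

import Mathlib

universe u v

/-- A configuration structure over event type `E` and label alphabet `L`:
a family of finite sets of events (configurations) with a labelling. -/
structure CS (E : Type u) (L : Type v) where
  C : Set (Set E)
  finite : ∀ X ∈ C, X.Finite
  label : E → L

namespace CS

variable {E E₁ E₂ : Type u} {L : Type v}

/-- Stability: rooted, connected, closed under bounded unions and intersections. -/
def IsStable (𝒞 : CS E L) : Prop :=
  ∅ ∈ 𝒞.C ∧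
  (∀ X ∈ 𝒞.C, X ≠ ∅ → ∃ e ∈ X, X \ {e} ∈ 𝒞.C) ∧
  (∀ X ∈ 𝒞.C, ∀ Y ∈ 𝒞.C, ∀ Z ∈ 𝒞.C, X ∪ Y ⊆ Z → X ∪ Y ∈ 𝒞.C) ∧
  (∀ X ∈ 𝒞.C, ∀ Y ∈ 𝒞.C, ∀ Z ∈ 𝒞.C, X ∪ Y ⊆ Z → X ∩ Y ∈ 𝒞.C)

/-- Causality: `d ≤_X e` iff every sub-configuration of `X` containing `e` contains `d`. -/
def le (𝒞 : CS E L) (X : Set E) (d e : E) : Prop :=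
  ∀ Y ∈ 𝒞.C, Y ⊆ X → e ∈ Y → d ∈ Y

/-- Strict causality `d <_X e`. -/
def lt (𝒞 : CS E L) (X : Set E) (d e : E) : Prop :=
  le 𝒞 X d e ∧ d ≠ e

/-- Concurrency within a configuration. -/
def co (𝒞 : CS E L) (X : Set E) (d e : E) : Prop :=
  ¬ lt 𝒞 X d e ∧ ¬ lt 𝒞 X e d

/-- The set of minimal events of a configuration. -/
def minE (𝒞 : CS E L) (X : Set E) : Set E :=
  {e | e ∈ X ∧ ∀ d ∈ X, ¬ lt 𝒞 X d e}

/-- Depth of an event in a configuration: the length of the longest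
causal chain (w.r.t. `<_X`) in `X` up to and including `e`. -/
noncomputable def depth (𝒞 : CS E L) (X : Set E) (e : E) : ℕ :=
  sSup {n | ∃ l : List E, l.length = n ∧ l.Chain' (lt 𝒞 X) ∧
    (∀ x ∈ l, x ∈ X) ∧ l.getLast? = some e}

/-- Multiset of labels of a (finite) set of events. -/
noncomputable def labelMS (𝒞 : CS E L) (S : Set E) : Multiset L := by
  classical exact if h : S.Finite then h.toFinset.val.map 𝒞.label else 0

/-- Single-event forward transition `X —a→ X'`. -/
def FTrans (𝒞 : CS E L) (a : L) (X X' : Set E) : Prop :=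
  X ∈ 𝒞.C ∧ X' ∈ 𝒞.C ∧ X ⊆ X' ∧ ∃ e, X' \ X = {e} ∧ 𝒞.label e = a

/-- Single-event reverse transition `X ⇝a X'`. -/
def RTrans (𝒞 : CS E L) (a : L) (X X' : Set E) : Prop :=
  FTrans 𝒞 a X' X

/-- Step transition `X —A→ X'`: the added events are pairwise concurrent
in `X'` and carry the label multiset `A`. -/
def Step (𝒞 : CS E L) (A : Multiset L) (X X' : Set E) : Prop :=
  X ∈ 𝒞.C ∧ X' ∈ 𝒞.C ∧ X ⊆ X' ∧ ∃ F : Finset E, ↑F = X' \ X ∧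
    (∀ d ∈ F, ∀ e ∈ F, co 𝒞 X' d e) ∧ F.val.map 𝒞.label = A

/-- Reverse step transition `X ⇝A X'`. -/
def RStep (𝒞 : CS E L) (A : Multiset L) (X X' : Set E) : Prop :=
  Step 𝒞 A X' X

/-- Equidepth step: all added events have the same depth in `X'`. -/
def EqStep (𝒞 : CS E L) (A : Multiset L) (X X' : Set E) : Prop :=
  Step 𝒞 A X X' ∧ ∀ d ∈ X' \ X, ∀ e ∈ X' \ X, depth 𝒞 X' d = depth 𝒞 X' e

/-- Reverse equidepth step `X ⇝A= X'`. -/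
def REqStep (𝒞 : CS E L) (A : Multiset L) (X X' : Set E) : Prop :=
  EqStep 𝒞 A X' X

/-- Single-event forward transition with depth: the new event has label `a`
and depth `k` in `X'`. -/
def FTransD (𝒞 : CS E L) (a : L) (k : ℕ) (X X' : Set E) : Prop :=
  X ∈ 𝒞.C ∧ X' ∈ 𝒞.C ∧ X ⊆ X' ∧
    ∃ e, X' \ X = {e} ∧ 𝒞.label e = a ∧ depth 𝒞 X' e = k

/-- Single-event reverse transition with depth. -/
def RTransD (𝒞 : CS E L) (a : L) (k : ℕ) (X X' : Set E) : Prop :=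
  FTransD 𝒞 a k X' X

/-- A multiset of labels is homogeneous if all its elements are equal. -/
def Hom (A : Multiset L) : Prop := ∀ a ∈ A, ∀ b ∈ A, a = b

/-- `R` is a relation between configurations of `𝒞` and `𝒟`, containing `(∅, ∅)`. -/
def Dom (𝒞 : CS E₁ L) (𝒟 : CS E₂ L) (R : Set E₁ → Set E₂ → Prop) : Prop :=
  R ∅ ∅ ∧ ∀ X Y, R X Y → X ∈ 𝒞.C ∧ Y ∈ 𝒟.C

/-- Interleaving bisimulation. -/
def IsIB (𝒞 : CS E₁ L) (𝒟 : CS E₂ L) (R : Set E₁ → Set E₂ → Prop) : Prop :=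
  Dom 𝒞 𝒟 R ∧ ∀ X Y, R X Y →
    (∀ a X', FTrans 𝒞 a X X' → ∃ Y', FTrans 𝒟 a Y Y' ∧ R X' Y') ∧
    (∀ a Y', FTrans 𝒟 a Y Y' → ∃ X', FTrans 𝒞 a X X' ∧ R X' Y')

/-- Reverse bisimulation: an IB also matching reverse single-event transitions. -/
def IsRB (𝒞 : CS E₁ L) (𝒟 : CS E₂ L) (R : Set E₁ → Set E₂ → Prop) : Prop :=
  IsIB 𝒞 𝒟 R ∧ ∀ X Y, R X Y →
    (∀ a X', RTrans 𝒞 a X X' → ∃ Y', RTrans 𝒟 a Y Y' ∧ R X' Y') ∧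
    (∀ a Y', RTrans 𝒟 a Y Y' → ∃ X', RTrans 𝒞 a X X' ∧ R X' Y')

/-- Step bisimulation. -/
def IsSB (𝒞 : CS E₁ L) (𝒟 : CS E₂ L) (R : Set E₁ → Set E₂ → Prop) : Prop :=
  Dom 𝒞 𝒟 R ∧ ∀ X Y, R X Y →
    (∀ A X', Step 𝒞 A X X' → ∃ Y', Step 𝒟 A Y Y' ∧ R X' Y') ∧
    (∀ A Y', Step 𝒟 A Y Y' → ∃ X', Step 𝒞 A X X' ∧ R X' Y')

/-- Reverse step bisimulation: an SB also matching reverse steps. -/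
def IsRSB (𝒞 : CS E₁ L) (𝒟 : CS E₂ L) (R : Set E₁ → Set E₂ → Prop) : Prop :=
  IsSB 𝒞 𝒟 R ∧ ∀ X Y, R X Y →
    (∀ A X', RStep 𝒞 A X X' → ∃ Y', RStep 𝒟 A Y Y' ∧ R X' Y') ∧
    (∀ A Y', RStep 𝒟 A Y Y' → ∃ X', RStep 𝒞 A X X' ∧ R X' Y')

/-- Reverse homogeneous step bisimulation: matches forward single-event
transitions and reverse homogeneous steps. -/
def IsRHSB (𝒞 : CS E₁ L) (𝒟 : CS E₂ L) (R : Set E₁ → Set E₂ → Prop) : Prop :=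
  Dom 𝒞 𝒟 R ∧ ∀ X Y, R X Y →
    (∀ a X', FTrans 𝒞 a X X' → ∃ Y', FTrans 𝒟 a Y Y' ∧ R X' Y') ∧
    (∀ a Y', FTrans 𝒟 a Y Y' → ∃ X', FTrans 𝒞 a X X' ∧ R X' Y') ∧
    (∀ A X', Hom A → RStep 𝒞 A X X' → ∃ Y', RStep 𝒟 A Y Y' ∧ R X' Y') ∧
    (∀ A Y', Hom A → RStep 𝒟 A Y Y' → ∃ X', RStep 𝒞 A X X' ∧ R X' Y')

/-- Reverse homogeneous equidepth step bisimulation. -/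
def IsRHESB (𝒞 : CS E₁ L) (𝒟 : CS E₂ L) (R : Set E₁ → Set E₂ → Prop) : Prop :=
  Dom 𝒞 𝒟 R ∧ ∀ X Y, R X Y →
    (∀ a X', FTrans 𝒞 a X X' → ∃ Y', FTrans 𝒟 a Y Y' ∧ R X' Y') ∧
    (∀ a Y', FTrans 𝒟 a Y Y' → ∃ X', FTrans 𝒞 a X X' ∧ R X' Y') ∧
    (∀ A X', Hom A → REqStep 𝒞 A X X' → ∃ Y', REqStep 𝒟 A Y Y' ∧ R X' Y') ∧
    (∀ A Y', Hom A → REqStep 𝒟 A Y Y' → ∃ X', REqStep 𝒞 A X X' ∧ R X' Y')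

/-- Depth-respecting bisimulation. -/
def IsDB (𝒞 : CS E₁ L) (𝒟 : CS E₂ L) (R : Set E₁ → Set E₂ → Prop) : Prop :=
  Dom 𝒞 𝒟 R ∧ ∀ X Y, R X Y →
    (∀ a k X', FTransD 𝒞 a k X X' → ∃ Y', FTransD 𝒟 a k Y Y' ∧ R X' Y') ∧
    (∀ a k Y', FTransD 𝒟 a k Y Y' → ∃ X', FTransD 𝒞 a k X X' ∧ R X' Y')

/-- Reverse depth-respecting bisimulation. -/
def IsRDB (𝒞 : CS E₁ L) (𝒟 : CS E₂ L) (R : Set E₁ → Set E₂ → Prop) : Prop :=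
  IsDB 𝒞 𝒟 R ∧ ∀ X Y, R X Y →
    (∀ a k X', RTransD 𝒞 a k X X' → ∃ Y', RTransD 𝒟 a k Y Y' ∧ R X' Y') ∧
    (∀ a k Y', RTransD 𝒟 a k Y Y' → ∃ X', RTransD 𝒞 a k X X' ∧ R X' Y')

/-- The lifting of a configuration structure w.r.t. a configuration `M`. -/
def lift (𝒞 : CS E L) (M : Set E) : CS E L where
  C := {Z | ∃ X, X ∈ 𝒞.C ∧ M ⊆ X ∧ minE 𝒞 X = minE 𝒞 M ∧ Z = X \ M}
  finite := by
    rintro Z ⟨X, hX, -, -, rfl⟩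
    exact (𝒞.finite X hX).subset Set.diff_subset
  label := 𝒞.label

/-- Events of `X` of depth at most `n`. -/
def levelLe (𝒞 : CS E L) (X : Set E) (n : ℕ) : Set E :=
  {e | e ∈ X ∧ depth 𝒞 X e ≤ n}

/-- Events of `X` of depth exactly `n`. -/
def levelEq (𝒞 : CS E L) (X : Set E) (n : ℕ) : Set E :=
  {e | e ∈ X ∧ depth 𝒞 X e = n}

/-- No equidepth auto-concurrency: distinct concurrent events never share
both label and depth. -/
def NoEqAC (𝒞 : CS E L) : Prop :=
  ∀ X ∈ 𝒞.C, ∀ d ∈ X, ∀ e ∈ X, co 𝒞 X d e → 𝒞.label d = 𝒞.label e →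
    depth 𝒞 X d = depth 𝒞 X e → d = e

/-- `f` (a set of pairs) is a label- and order-preserving isomorphism
between configurations `X` and `Y`. -/
def IsIso (𝒞 : CS E₁ L) (𝒟 : CS E₂ L) (X : Set E₁) (Y : Set E₂)
    (f : Set (E₁ × E₂)) : Prop :=
  (∀ p ∈ f, p.1 ∈ X ∧ p.2 ∈ Y) ∧
  (∀ d ∈ X, ∃! e, (d, e) ∈ f) ∧
  (∀ e ∈ Y, ∃! d, (d, e) ∈ f) ∧
  (∀ p ∈ f, 𝒞.label p.1 = 𝒟.label p.2) ∧
  (∀ p ∈ f, ∀ q ∈ f, (lt 𝒞 X p.1 q.1 ↔ lt 𝒟 Y p.2 q.2))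

/-- Hereditary history-preserving bisimulation. -/
def IsHH (𝒞 : CS E₁ L) (𝒟 : CS E₂ L)
    (R : Set (Set E₁ × Set E₂ × Set (E₁ × E₂))) : Prop :=
  (∅, ∅, ∅) ∈ R ∧
  ∀ X Y f, (X, Y, f) ∈ R →
    X ∈ 𝒞.C ∧ Y ∈ 𝒟.C ∧ IsIso 𝒞 𝒟 X Y f ∧
    (∀ a X', FTrans 𝒞 a X X' → ∃ Y' f', FTrans 𝒟 a Y Y' ∧
      (X', Y', f') ∈ R ∧ {p ∈ f' | p.1 ∈ X} = f) ∧
    (∀ a Y', FTrans 𝒟 a Y Y' → ∃ X' f', FTrans 𝒞 a X X' ∧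
      (X', Y', f') ∈ R ∧ {p ∈ f' | p.1 ∈ X} = f) ∧
    (∀ a X', RTrans 𝒞 a X X' → ∃ Y' f', RTrans 𝒟 a Y Y' ∧
      (X', Y', f') ∈ R ∧ {p ∈ f | p.1 ∈ X'} = f')

end CS

open CS

/-!
Related configurations have the same profile: the same number of events with any given label
at any given depth. Removing from `X` all events of maximal depth `m` labelled `b` is a reverse
homogeneous equidepth step. It is matched by a step of `Y` removing as many `b`-events, all at
one depth `m₁`, and by induction the two smaller configurations have equal profiles. So each
profile arises from the other by moving a top class to another depth; as the depths occurring in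
a configuration form an interval `1, …, height`, counting forces `m₁ = m`. Comparing profiles
before and after the two transitions then gives `k = k'`.
-/

theorem eq_of_top_moves {L : Type*} [DecidableEq L] {f g : ℕ × L → ℕ} {m M : ℕ}
    (hf : ∀ p, f p ≠ 0 → 1 ≤ p.1 ∧ p.1 ≤ m) (hg : ∀ p, g p ≠ 0 → 1 ≤ p.1 ∧ p.1 ≤ M)
    (hf_lev : ∀ n, 1 ≤ n → n ≤ m → ∃ c, f (n, c) ≠ 0)
    (hg_lev : ∀ n, 1 ≤ n → n ≤ M → ∃ c, g (n, c) ≠ 0)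
    (hf_move : ∀ b, f (m, b) ≠ 0 →
      ∃ m₁, f + Pi.single (m₁, b) (f (m, b)) = g + Pi.single (m, b) (f (m, b)))
    (hg_move : ∀ b, g (M, b) ≠ 0 →
      ∃ M₁, g + Pi.single (M₁, b) (g (M, b)) = f + Pi.single (M, b) (g (M, b))) :
    f = g := by
  wlog hMm : M ≤ m generalizing f g m M
  · exact (this hg hf hg_lev hf_lev hg_move hf_move (by omega)).symm
  rcases Nat.eq_zero_or_pos m with rfl | hm
  · funext p
    by_contra hfg
    rcases Nat.eq_zero_or_pos (f p) with hfp | hfp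
    · have := hg p (by omega); omega
    · have := hf p (by omega); omega
  obtain ⟨b, hb⟩ := hf_lev m hm le_rfl
  obtain ⟨m₁, h₁⟩ := hf_move b hb
  by_cases hm₁ : m₁ = m
  · subst hm₁; exact add_right_cancel h₁
  exfalso
  have e₁ (n : ℕ) : f (n, b) + (if n = m₁ then f (m, b) else 0) =
      g (n, b) + (if n = m then f (m, b) else 0) := by
    simpa [Pi.single_apply] using congrFun h₁ (n, b)
  have e₁' (n : ℕ) (c : L) (hcb : c ≠ b) : f (n, c) = g (n, c) := by
    simpa [Pi.single_apply, hcb] using congrFun h₁ (n, c)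
  have hgm : g (m, b) = 0 := by have := e₁ m; split_ifs at this <;> omega
  have hgm₁ : g (m₁, b) ≠ 0 := by have := e₁ m₁; split_ifs at this <;> omega
  -- A nontrivial move of `g` must undo that of `f`: it moves the class `(M, b)` with `M = m₁`,
  -- so that level `M` of `f` holds no `b`.
  have key : ∀ c, g (M, c) ≠ 0 → c = b ∧ M = m₁ ∧ f (M, b) = 0 := by
    intro c hc
    obtain ⟨μ, h₂⟩ := hg_move c hc
    obtain rfl : b = c := by
      by_contra hbc
      have : g (m, b) = f (m, b) := by simpa [Pi.single_apply, hbc] using congrFun h₂ (m, b)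
      omega
    have e₂ (n : ℕ) : g (n, b) + (if n = μ then g (M, b) else 0) =
        f (n, b) + (if n = M then g (M, b) else 0) := by
      simpa [Pi.single_apply] using congrFun h₂ (n, b)
    have hMm' : M ≠ m := fun h => hc (h ▸ hgm)
    have hμ : μ = m := by have := e₂ m; split_ifs at this <;> omega
    have hfM : f (M, b) = 0 := by have := e₂ M; split_ifs at this <;> omega
    refine ⟨rfl, ?_, hfM⟩
    have := e₁ M
    split_ifs at this <;> omega
  have hM : 1 ≤ M := le_trans (hg _ hgm₁).1 (hg _ hgm₁).2
  obtain ⟨c₀, hc₀⟩ := hg_lev M hM le_rfl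
  obtain ⟨-, rfl, hfM⟩ := key c₀ hc₀
  obtain ⟨c, hc⟩ := hf_lev M hM (by omega)
  have hcb : c ≠ b := fun h => hc (h ▸ hfM)
  exact hcb (key c (e₁' M c hcb ▸ hc)).1

namespace CS

variable {E E' L : Type*} {𝒞 : CS E L} {𝒟 : CS E' L} {X X₁ Z : Set E} {Y : Set E'} {d e f : E}

theorem le.trans (hde : le 𝒞 X d e) (hef : le 𝒞 X e f) : le 𝒞 X d f :=
  fun Y hY hYX hf => hde Y hY hYX (hef Y hY hYX hf)

theorem le.mem (hX : X ∈ 𝒞.C) (he : e ∈ X) (hde : le 𝒞 X d e) : d ∈ X :=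
  hde X hX subset_rfl he

theorem le_iff_of_subset (h𝒞 : IsStable 𝒞) (hX₁ : X₁ ∈ 𝒞.C) (hX : X ∈ 𝒞.C) (hsub : X₁ ⊆ X)
    (he : e ∈ X₁) : le 𝒞 X₁ d e ↔ le 𝒞 X d e := by
  refine ⟨fun h Y hY hYX heY => ?_, fun h Y hY hYX heY => h Y hY (hYX.trans hsub) heY⟩
  have hX₁Y : X₁ ∩ Y ∈ 𝒞.C := h𝒞.2.2.2 X₁ hX₁ Y hY X hX (Set.union_subset hsub hYX)
  exact (h _ hX₁Y Set.inter_subset_left ⟨he, heY⟩).2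

theorem lt_iff_of_subset (h𝒞 : IsStable 𝒞) (hX₁ : X₁ ∈ 𝒞.C) (hX : X ∈ 𝒞.C) (hsub : X₁ ⊆ X)
    (he : e ∈ X₁) : lt 𝒞 X₁ d e ↔ lt 𝒞 X d e :=
  and_congr_left' (le_iff_of_subset h𝒞 hX₁ hX hsub he)

-- Connectedness removes some event `f` from `X`; `f` can be neither `d` nor `e`, since the rest
-- of `X` would then separate the two, so induction applies to `X \ {f}`.
theorem le.antisymm (h𝒞 : IsStable 𝒞) (hX : X ∈ 𝒞.C) (hd : d ∈ X) (he : e ∈ X)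
    (hde : le 𝒞 X d e) (hed : le 𝒞 X e d) : d = e := by
  induction hn : X.ncard using Nat.strong_induction_on generalizing X with
  | _ n ih =>
  by_contra hne
  obtain ⟨f, hf, hXf⟩ := h𝒞.2.1 X hX (Set.nonempty_of_mem hd).ne_empty
  have hfd : f ≠ d := by
    rintro rfl
    exact (hde _ hXf Set.sdiff_subset ⟨he, Ne.symm hne⟩).2 rfl
  have hfe : f ≠ e := by
    rintro rfl
    exact (hed _ hXf Set.sdiff_subset ⟨hd, hne⟩).2 rfl
  have hd' : d ∈ X \ {f} := ⟨hd, hfd.symm⟩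
  have he' : e ∈ X \ {f} := ⟨he, hfe.symm⟩
  exact hne <| ih _ (hn ▸ Set.ncard_sdiff_singleton_lt_of_mem hf (𝒞.finite X hX)) hXf hd' he'
    ((le_iff_of_subset h𝒞 hXf hX Set.sdiff_subset he').2 hde)
    ((le_iff_of_subset h𝒞 hXf hX Set.sdiff_subset hd').2 hed) rfl

theorem nodup_of_isChain (h𝒞 : IsStable 𝒞) (hX : X ∈ 𝒞.C) {l : List E}
    (hl : l.IsChain (lt 𝒞 X)) (hlX : ∀ x ∈ l, x ∈ X) : l.Nodup := by
  let S : E → E → Prop := fun x y => le 𝒞 X x y ∧ ¬ le 𝒞 X y x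
  have : Trans S S S := ⟨fun hxy hyz => ⟨hxy.1.trans hyz.1, fun hzx => hyz.2 (hzx.trans hxy.1)⟩⟩
  have hS : l.IsChain S := hl.imp_of_mem_imp fun x y hx hy hxy =>
    ⟨hxy.1, fun hyx => hxy.2 (le.antisymm h𝒞 hX (hlX x hx) (hlX y hy) hxy.1 hyx)⟩
  exact hS.pairwise.imp fun {x y} (hxy : S x y) (h : x = y) => hxy.2 (h ▸ hxy.1)

theorem bddAbove_chain_lengths (h𝒞 : IsStable 𝒞) (hX : X ∈ 𝒞.C) (e : E) :
    BddAbove {n | ∃ l : List E, l.length = n ∧ l.IsChain (lt 𝒞 X) ∧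
      (∀ x ∈ l, x ∈ X) ∧ l.getLast? = some e} := by
  classical
  refine ⟨X.ncard, ?_⟩
  rintro _ ⟨l, rfl, hl, hlX, -⟩
  rw [← List.toFinset_card_of_nodup (nodup_of_isChain h𝒞 hX hl hlX), ← Set.ncard_coe_finset]
  exact Set.ncard_le_ncard (fun x hx => hlX x (by simpa using hx)) (𝒞.finite X hX)

theorem length_le_depth (h𝒞 : IsStable 𝒞) (hX : X ∈ 𝒞.C) {l : List E}
    (hl : l.IsChain (lt 𝒞 X)) (hlX : ∀ x ∈ l, x ∈ X) (hle : l.getLast? = some e) :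
    l.length ≤ depth 𝒞 X e :=
  le_csSup (bddAbove_chain_lengths h𝒞 hX e) ⟨l, rfl, hl, hlX, hle⟩

theorem exists_isChain_length_eq_depth (h𝒞 : IsStable 𝒞) (hX : X ∈ 𝒞.C) (he : e ∈ X) :
    ∃ l : List E, l.length = depth 𝒞 X e ∧ l.IsChain (lt 𝒞 X) ∧
      (∀ x ∈ l, x ∈ X) ∧ l.getLast? = some e := by
  refine Nat.sSup_mem ?_ (bddAbove_chain_lengths h𝒞 hX e)
  exact ⟨1, [e], rfl, .singleton e, by simpa using he, rfl⟩

theorem one_le_depth (h𝒞 : IsStable 𝒞) (hX : X ∈ 𝒞.C) (he : e ∈ X) : 1 ≤ depth 𝒞 X e :=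
  length_le_depth h𝒞 hX (l := [e]) (.singleton e) (by simpa using he) rfl

theorem depth_lt_depth (h𝒞 : IsStable 𝒞) (hX : X ∈ 𝒞.C) (hd : d ∈ X) (he : e ∈ X)
    (hde : lt 𝒞 X d e) : depth 𝒞 X d < depth 𝒞 X e := by
  obtain ⟨l, hlen, hl, hlX, hld⟩ := exists_isChain_length_eq_depth h𝒞 hX hd
  have hchain : (l ++ [e]).IsChain (lt 𝒞 X) := by
    refine List.isChain_append.2 ⟨hl, .singleton e, fun x hx y hy => ?_⟩
    rw [hld, Option.mem_some_iff] at hx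
    rw [List.head?_singleton, Option.mem_some_iff] at hy
    exact hx ▸ hy ▸ hde
  have := length_le_depth h𝒞 hX hchain (by simpa [or_imp, forall_and] using ⟨hlX, he⟩)
    List.getLast?_concat
  simp only [List.length_append, List.length_singleton, hlen] at this
  omega

theorem depth_eq_of_subset (h𝒞 : IsStable 𝒞) (hX₁ : X₁ ∈ 𝒞.C) (hX : X ∈ 𝒞.C) (hsub : X₁ ⊆ X)
    (he : e ∈ X₁) : depth 𝒞 X₁ e = depth 𝒞 X e := by
  have hlt : ∀ {l : List E}, (∀ x ∈ l, x ∈ X₁) →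
      (l.IsChain (lt 𝒞 X₁) ↔ l.IsChain (lt 𝒞 X)) := fun hlX₁ =>
    List.IsChain.iff_of_mem_imp fun _ y _ hy => lt_iff_of_subset h𝒞 hX₁ hX hsub (hlX₁ y hy)
  refine congrArg sSup (Set.ext fun n => ⟨?_, ?_⟩)
  · rintro ⟨l, hlen, hl, hlX₁, hle⟩
    exact ⟨l, hlen, (hlt hlX₁).1 hl, fun x hx => hsub (hlX₁ x hx), hle⟩
  · rintro ⟨l, hlen, hl, hlX, hle⟩
    -- every event of a chain ending in `e` lies below `e`, hence in `X₁`
    have hlX₁ : ∀ x ∈ l, x ∈ X₁ := hl.backwards_induction (· ∈ X₁) l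
      (fun x y hxy hy => hxy.1 X₁ hX₁ hsub hy)
      (fun hne => by rw [List.getLast?_eq_some_getLast hne, Option.some_inj] at hle; rwa [hle])
    exact ⟨l, hlen, (hlt hlX₁).2 hl, hlX₁, hle⟩

theorem exists_depth_eq_pred (h𝒞 : IsStable 𝒞) (hX : X ∈ 𝒞.C) (he : e ∈ X) {n : ℕ}
    (hn : 1 ≤ n) (hdepth : depth 𝒞 X e = n + 1) : ∃ d ∈ X, depth 𝒞 X d = n := by
  obtain ⟨l, hlen, hl, hlX, hle⟩ := exists_isChain_length_eq_depth h𝒞 hX he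
  have hne : l.dropLast ≠ [] := by
    intro h
    have := congrArg List.length h
    simp only [List.length_dropLast, List.length_nil] at this
    omega
  have hl_ne : l ≠ [] := fun h => by simp [h] at hne
  set d := l.dropLast.getLast hne
  have hdX : d ∈ X := hlX d (List.dropLast_subset l (List.getLast_mem hne))
  have hlast : l.getLast hl_ne = e := by
    rw [List.getLast?_eq_some_getLast hl_ne, Option.some_inj] at hle
    exact hle
  have hde : lt 𝒞 X d e := hlast ▸ hl.rel_getLast_dropLast hne
  have hn_le : n ≤ depth 𝒞 X d := by
    have := length_le_depth h𝒞 hX hl.dropLast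
      (fun x hx => hlX x (List.dropLast_subset l hx)) (List.getLast?_eq_some_getLast hne)
    simpa [hlen, hdepth] using this
  exact ⟨d, hdX, by have := depth_lt_depth h𝒞 hX hdX he hde; omega⟩

theorem exists_depth_eq (h𝒞 : IsStable 𝒞) (hX : X ∈ 𝒞.C) (he : e ∈ X) {n : ℕ}
    (hn : 1 ≤ n) (hle : n ≤ depth 𝒞 X e) : ∃ d ∈ X, depth 𝒞 X d = n := by
  induction hk : depth 𝒞 X e using Nat.strong_induction_on generalizing e with
  | _ k ih =>
  obtain rfl | hlt := eq_or_lt_of_le (hk ▸ hle)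
  · exact ⟨e, he, hk⟩
  obtain ⟨k, rfl⟩ : ∃ k', k = k' + 1 := ⟨k - 1, by omega⟩
  obtain ⟨d, hd, hdk⟩ := exists_depth_eq_pred h𝒞 hX he (by omega) hk
  exact ih k (by omega) hd (by omega) hdk

theorem exists_height (h𝒞 : IsStable 𝒞) (hX : X ∈ 𝒞.C) :
    ∃ m, (∀ e ∈ X, depth 𝒞 X e ≤ m) ∧ ∀ n, 1 ≤ n → n ≤ m → ∃ d ∈ X, depth 𝒞 X d = n := by
  rcases X.eq_empty_or_nonempty with rfl | hne
  · exact ⟨0, by simp, fun n h1 h2 => by omega⟩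
  obtain ⟨e, he, hmax⟩ := Set.exists_max_image X (depth 𝒞 X) (𝒞.finite X hX) hne
  exact ⟨depth 𝒞 X e, hmax, fun n h1 h2 => exists_depth_eq h𝒞 hX he h1 h2⟩

theorem inter_sInter_mem (h𝒞 : IsStable 𝒞) (hX : X ∈ 𝒞.C) {S : Set (Set E)} (hS : S.Finite)
    (hSX : ∀ Y ∈ S, Y ∈ 𝒞.C ∧ Y ⊆ X) : X ∩ ⋂₀ S ∈ 𝒞.C := by
  induction S, hS using Set.Finite.induction_on with
  | empty => simpa using hX
  | @insert Y S _ _ ih =>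
    obtain ⟨⟨hY, hYX⟩, hSX⟩ := Set.forall_mem_insert.1 hSX
    have hYS : X ∩ ⋂₀ insert Y S = Y ∩ (X ∩ ⋂₀ S) := by
      rw [Set.sInter_insert, ← Set.inter_assoc, Set.inter_comm X, Set.inter_assoc]
    rw [hYS]
    exact h𝒞.2.2.2 Y hY _ (ih hSX) X hX (Set.union_subset hYX Set.inter_subset_left)

theorem sUnion_mem (h𝒞 : IsStable 𝒞) (hX : X ∈ 𝒞.C) {S : Set (Set E)} (hS : S.Finite)
    (hSX : ∀ Y ∈ S, Y ∈ 𝒞.C ∧ Y ⊆ X) : ⋃₀ S ∈ 𝒞.C := by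
  induction S, hS using Set.Finite.induction_on with
  | empty => simpa using h𝒞.1
  | @insert Y S _ _ ih =>
    obtain ⟨⟨hY, hYX⟩, hSX⟩ := Set.forall_mem_insert.1 hSX
    rw [Set.sUnion_insert]
    exact h𝒞.2.2.1 Y hY _ (ih hSX) X hX
      (Set.union_subset hYX (Set.sUnion_subset fun Z hZ => (hSX Z hZ).2))

-- By definition of `le`, the down-set of `e` is the intersection of the configurations
-- between `e` and `X`.
theorem setOf_le_mem (h𝒞 : IsStable 𝒞) (hX : X ∈ 𝒞.C) (he : e ∈ X) :
    {d | le 𝒞 X d e} ∈ 𝒞.C := by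
  have hS : {Y | Y ∈ 𝒞.C ∧ Y ⊆ X ∧ e ∈ Y}.Finite :=
    (𝒞.finite X hX).finite_subsets.subset fun Y hY => hY.2.1
  convert inter_sInter_mem h𝒞 hX hS fun Y hY => ⟨hY.1, hY.2.1⟩ using 1
  ext d
  simp only [Set.mem_ofPred_eq, Set.mem_inter_iff, Set.mem_sInter, and_imp]
  exact ⟨fun hde => ⟨hde.mem hX he, hde⟩, And.right⟩

theorem mem_of_le_closed (h𝒞 : IsStable 𝒞) (hX : X ∈ 𝒞.C) (hZX : Z ⊆ X)
    (hZ : ∀ d e, e ∈ Z → le 𝒞 X d e → d ∈ Z) : Z ∈ 𝒞.C := by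
  have hZeq : Z = ⋃₀ ((fun e => {d | le 𝒞 X d e}) '' Z) := by
    ext d
    simp only [Set.sUnion_image, Set.mem_iUnion, Set.mem_ofPred_eq, exists_prop]
    exact ⟨fun hd => ⟨d, hd, fun _ _ _ h => h⟩, fun ⟨e, he, hde⟩ => hZ d e he hde⟩
  rw [hZeq]
  refine sUnion_mem h𝒞 hX (((𝒞.finite X hX).subset hZX).image _) ?_
  rintro _ ⟨e, he, rfl⟩
  exact ⟨setOf_le_mem h𝒞 hX (hZX he), fun d hde => le.mem hX (hZX he) hde⟩

def eventsAt (𝒞 : CS E L) (X : Set E) (p : ℕ × L) : Set E :=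
  {e ∈ X | depth 𝒞 X e = p.1 ∧ 𝒞.label e = p.2}

-- `profile 𝒞 X (n, ·)` is the paper's multiset of labels of the events of depth `n`, given by
-- its multiplicities.
noncomputable def profile (𝒞 : CS E L) (X : Set E) (p : ℕ × L) : ℕ :=
  (eventsAt 𝒞 X p).ncard

theorem profile_ne_zero_iff (hX : X ∈ 𝒞.C) {p : ℕ × L} :
    profile 𝒞 X p ≠ 0 ↔ ∃ e ∈ X, depth 𝒞 X e = p.1 ∧ 𝒞.label e = p.2 := by
  rw [profile, Ne, Set.ncard_eq_zero ((𝒞.finite X hX).subset fun _ he => he.1)]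
  exact Set.nonempty_iff_ne_empty.symm

theorem exists_profile_height (h𝒞 : IsStable 𝒞) (hX : X ∈ 𝒞.C) :
    ∃ m, (∀ e ∈ X, depth 𝒞 X e ≤ m) ∧ (∀ p, profile 𝒞 X p ≠ 0 → 1 ≤ p.1 ∧ p.1 ≤ m) ∧
      ∀ n, 1 ≤ n → n ≤ m → ∃ c, profile 𝒞 X (n, c) ≠ 0 := by
  obtain ⟨m, hmax, hlev⟩ := exists_height h𝒞 hX
  refine ⟨m, hmax, fun p hp => ?_, fun n h1 h2 => ?_⟩
  · obtain ⟨e, he, hdepth, -⟩ := (profile_ne_zero_iff hX).1 hp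
    exact hdepth ▸ ⟨one_le_depth h𝒞 hX he, hmax e he⟩
  · obtain ⟨e, he, rfl⟩ := hlev n h1 h2
    exact ⟨𝒞.label e, (profile_ne_zero_iff hX).2 ⟨e, he, rfl, rfl⟩⟩

theorem profile_eq_add_single [DecidableEq L] (h𝒞 : IsStable 𝒞) (hX₁ : X₁ ∈ 𝒞.C)
    (hX : X ∈ 𝒞.C) (hsub : X₁ ⊆ X) {p : ℕ × L}
    (hnew : ∀ e ∈ X \ X₁, depth 𝒞 X e = p.1 ∧ 𝒞.label e = p.2) :
    profile 𝒞 X = profile 𝒞 X₁ + Pi.single p (X \ X₁).ncard := by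
  funext q
  have hfin := 𝒞.finite X hX
  have hsplit : eventsAt 𝒞 X q = eventsAt 𝒞 X₁ q ∪ {e ∈ X \ X₁ | q = p} := by
    ext e
    by_cases he : e ∈ X₁
    · simp [eventsAt, he, hsub he, depth_eq_of_subset h𝒞 hX₁ hX hsub he]
    by_cases heX : e ∈ X
    · obtain ⟨hd, hl⟩ := hnew e ⟨heX, he⟩
      simp [eventsAt, he, heX, hd, hl, Prod.ext_iff, eq_comm]
    · simp [eventsAt, he, heX]
  rw [Pi.add_apply, profile, hsplit, Set.ncard_union_eq _ (hfin.subset fun e he => hsub he.1)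
    (hfin.subset fun e he => he.1.1), profile]
  · by_cases hq : q = p
    · subst hq
      simp only [Set.sep_true, Pi.single_eq_same]
    · simp [hq]
  · exact Set.disjoint_left.2 fun e he₁ he => he.1.2 he₁.1

theorem profile_eq_of_fTransD [DecidableEq L] (h𝒞 : IsStable 𝒞) {a : L} {k : ℕ}
    (h : FTransD 𝒞 a k X X₁) : profile 𝒞 X₁ = profile 𝒞 X + Pi.single (k, a) 1 := by
  obtain ⟨hX, hX₁, hsub, e, hdiff, hlabel, hdepth⟩ := h
  have := profile_eq_add_single h𝒞 hX hX₁ hsub (p := (k, a))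
    (by rw [hdiff]; rintro _ rfl; exact ⟨hdepth, hlabel⟩)
  rwa [hdiff, Set.ncard_singleton] at this

theorem ncard_lt_of_rEqStep {A : Multiset L} (h : REqStep 𝒞 A X X₁) (hA : A ≠ 0) :
    X₁.ncard < X.ncard := by
  obtain ⟨⟨-, hX, hsub, F, hF, -, hFA⟩, -⟩ := h
  obtain ⟨e, heF⟩ : F.Nonempty := by
    rw [Finset.nonempty_iff_ne_empty]
    rintro rfl
    exact hA (by simp [← hFA])
  have he : e ∈ X \ X₁ := hF ▸ heF
  exact Set.ncard_lt_ncard (Set.ssubset_iff_of_subset hsub |>.2 ⟨e, he.1, he.2⟩) (𝒞.finite X hX)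

theorem exists_profile_eq_of_rEqStep [DecidableEq L] (h𝒞 : IsStable 𝒞) {r : ℕ} {b : L}
    (h : REqStep 𝒞 (Multiset.replicate r b) X X₁) :
    ∃ m₁, profile 𝒞 X = profile 𝒞 X₁ + Pi.single (m₁, b) r := by
  obtain ⟨⟨hX₁, hX, hsub, F, hF, -, hFb⟩, hdepth⟩ := h
  obtain ⟨m₁, hm₁⟩ : ∃ m₁, ∀ e ∈ X \ X₁, depth 𝒞 X e = m₁ := by
    rcases (X \ X₁).eq_empty_or_nonempty with hempty | ⟨e₀, he₀⟩
    · exact ⟨0, by simp [hempty]⟩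
    · exact ⟨_, fun e he => hdepth e he e₀ he₀⟩
  have hlabel : ∀ e ∈ X \ X₁, 𝒞.label e = b := fun e he =>
    Multiset.eq_of_mem_replicate (hFb ▸ Multiset.mem_map_of_mem _ (hF ▸ he : e ∈ (F : Set E)))
  have hcard : (X \ X₁).ncard = r := by
    rw [← hF, Set.ncard_coe_finset, ← Multiset.card_replicate r b, ← hFb, Multiset.card_map]
    rfl
  exact ⟨m₁, hcard ▸ profile_eq_add_single h𝒞 hX₁ hX hsub fun e he => ⟨hm₁ e he, hlabel e he⟩⟩

theorem rEqStep_sdiff_eventsAt (h𝒞 : IsStable 𝒞) (hX : X ∈ 𝒞.C) {m : ℕ}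
    (hm : ∀ e ∈ X, depth 𝒞 X e ≤ m) (b : L) :
    REqStep 𝒞 (Multiset.replicate (profile 𝒞 X (m, b)) b) X (X \ eventsAt 𝒞 X (m, b)) := by
  set A := eventsAt 𝒞 X (m, b)
  have hAX : A ⊆ X := fun _ he => he.1
  have hfin : A.Finite := (𝒞.finite X hX).subset hAX
  have hXA : X \ (X \ A) = A := Set.sdiff_sdiff_cancel_left hAX
  -- events of maximal depth are maximal, so removing them leaves a down-closed set
  have hXA_mem : X \ A ∈ 𝒞.C := by
    refine mem_of_le_closed h𝒞 hX Set.sdiff_subset fun d e he hde => ⟨hde.mem hX he.1, ?_⟩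
    intro hdA
    have hne : d ≠ e := fun h => he.2 (h ▸ hdA)
    have := depth_lt_depth h𝒞 hX hdA.1 he.1 ⟨hde, hne⟩
    have := hm e he.1
    have := hdA.2.1
    omega
  have hconc : ∀ d ∈ A, ∀ e ∈ A, ¬ lt 𝒞 X d e := fun d hd e he hde => by
    have := depth_lt_depth h𝒞 hX hd.1 he.1 hde
    rw [hd.2.1, he.2.1] at this
    exact lt_irrefl _ this
  refine ⟨⟨hXA_mem, hX, Set.sdiff_subset, hfin.toFinset, by rw [hXA, hfin.coe_toFinset], ?_, ?_⟩,
    fun d hd e he => ?_⟩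
  · simp only [Set.Finite.mem_toFinset]
    exact fun d hd e he => ⟨hconc d hd e he, hconc e he d hd⟩
  · refine Multiset.eq_replicate.2 ⟨?_, fun c hc => ?_⟩
    · rw [Multiset.card_map, profile, Set.ncard_eq_toFinset_card A hfin]
      rfl
    · obtain ⟨e, he, rfl⟩ := Multiset.mem_map.1 hc
      exact ((hfin.mem_toFinset).1 he).2.2
  · rw [hXA] at hd he
    rw [hd.2.1, he.2.1]

theorem exists_top_move [DecidableEq L] (h𝒞 : IsStable 𝒞) (h𝒟 : IsStable 𝒟)
    {S : Set E → Set E' → Prop}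
    (hmatch : ∀ A X', Hom A → REqStep 𝒞 A X X' → ∃ Y', REqStep 𝒟 A Y Y' ∧ S X' Y')
    (hX : X ∈ 𝒞.C) {m : ℕ} (hm : ∀ e ∈ X, depth 𝒞 X e ≤ m) {b : L}
    (hb : profile 𝒞 X (m, b) ≠ 0) :
    ∃ X₁ Y₁ m₁, S X₁ Y₁ ∧ X₁.ncard < X.ncard ∧ Y₁.ncard < Y.ncard ∧
      (profile 𝒞 X₁ = profile 𝒟 Y₁ →
        profile 𝒞 X + Pi.single (m₁, b) (profile 𝒞 X (m, b)) =
          profile 𝒟 Y + Pi.single (m, b) (profile 𝒞 X (m, b))) := by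
  set r := profile 𝒞 X (m, b)
  have hstep := rEqStep_sdiff_eventsAt h𝒞 hX hm b
  have hhom : Hom (Multiset.replicate r b) := fun x hx y hy =>
    (Multiset.eq_of_mem_replicate hx).trans (Multiset.eq_of_mem_replicate hy).symm
  have hne : Multiset.replicate r b ≠ 0 := fun h => hb (by simpa using congrArg Multiset.card h)
  obtain ⟨Y₁, hY, hS⟩ := hmatch _ _ hhom hstep
  obtain ⟨m₁, hY₁⟩ := exists_profile_eq_of_rEqStep h𝒟 hY
  have hXA : X \ (X \ eventsAt 𝒞 X (m, b)) = eventsAt 𝒞 X (m, b) :=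
    Set.sdiff_sdiff_cancel_left fun _ h => h.1
  have hX₁ := profile_eq_add_single h𝒞 hstep.1.1 hX Set.sdiff_subset (p := (m, b))
    fun e he => (hXA ▸ he).2
  rw [hXA] at hX₁
  refine ⟨_, Y₁, m₁, hS, ncard_lt_of_rEqStep hstep hne, ncard_lt_of_rEqStep hY hne, fun h => ?_⟩
  rw [hX₁, hY₁, h, add_right_comm]
  rfl

theorem profile_eq_of_isRHESB {E₁ E₂ : Type u} {L : Type v} [DecidableEq L] {𝒞 : CS E₁ L}
    {𝒟 : CS E₂ L} (h𝒞 : IsStable 𝒞) (h𝒟 : IsStable 𝒟) {R : Set E₁ → Set E₂ → Prop}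
    (hR : IsRHESB 𝒞 𝒟 R) {X : Set E₁} {Y : Set E₂} (hXY : R X Y) :
    profile 𝒞 X = profile 𝒟 Y := by
  induction hn : X.ncard using Nat.strong_induction_on generalizing X Y with
  | _ n ih =>
  obtain ⟨hX, hY⟩ := hR.1.2 X Y hXY
  obtain ⟨-, -, hmatch𝒞, hmatch𝒟⟩ := hR.2 X Y hXY
  obtain ⟨m, hmX, hsuppX, hlevX⟩ := exists_profile_height h𝒞 hX
  obtain ⟨M, hmY, hsuppY, hlevY⟩ := exists_profile_height h𝒟 hY
  refine eq_of_top_moves hsuppX hsuppY hlevX hlevY (fun b hb => ?_) (fun b hb => ?_)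
  · obtain ⟨X₁, Y₁, m₁, hR₁, hX₁, -, hmove⟩ := exists_top_move h𝒞 h𝒟 hmatch𝒞 hX hmX hb
    exact ⟨m₁, hmove (ih _ (hn ▸ hX₁) hR₁ rfl)⟩
  · obtain ⟨Y₁, X₁, M₁, hR₁, -, hX₁, hmove⟩ :=
      exists_top_move (S := fun Y' X' => R X' Y') h𝒟 h𝒞 hmatch𝒟 hY hmY hb
    exact ⟨M₁, hmove (ih _ (hn ▸ hX₁) hR₁ rfl).symm⟩

end CS

/-- an RHESB matches single-event transitions on depth. -/
theorem stmt15 {E₁ E₂ : Type u} {L : Type v} (𝒞 : CS E₁ L) (𝒟 : CS E₂ L)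
    (h𝒞 : IsStable 𝒞) (h𝒟 : IsStable 𝒟)
    (R : Set E₁ → Set E₂ → Prop) (hR : IsRHESB 𝒞 𝒟 R)
    (X X' : Set E₁) (Y Y' : Set E₂) (a : L) (k k' : ℕ)
    (hX : FTransD 𝒞 a k X X') (hY : FTransD 𝒟 a k' Y Y')
    (h1 : R X Y) (h2 : R X' Y') :
    k = k' := by
  classical
  have h := profile_eq_of_isRHESB h𝒞 h𝒟 hR h2
  rw [profile_eq_of_fTransD h𝒞 hX, profile_eq_of_fTransD h𝒟 hY,
    profile_eq_of_isRHESB h𝒞 h𝒟 hR h1] at h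
  simpa [Pi.single_apply] using congrFun (add_left_cancel h) (k, a)
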